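/- arXiv:0805.1213 — 3 statements merged into one kernel-verified Lean document; each statement's English description precedes it below -/
import Mathlib

section
/- Let M be a matroid on ground set E with weight function w': E → ℝ≥0, and let i ≠ x be elements of E. If x belongs to some maximum-weight basis of M, then x belongs to some maximum-weight basis of the matroid M restricted to E \ {i} (equivalently, of the deletion M \ i, assuming x remains non-loop). -/
open scoped Matroid

open Set

private lemma finsum_split {E : Type*} (w : E → ℝ) {S : Set E} {a : E}
    (ha : a ∈ S) (hS : S.Finite) :
    ∑ᶠ e ∈ S, w e = w a + ∑ᶠ e ∈ S \ {a}, w e := by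
  have h := finsum_mem_insert w (fun h' : a ∈ S \ {a} => h'.2 rfl) (hS.diff (t := {a}))
  rwa [Set.insert_diff_singleton, Set.insert_eq_self.mpr ha] at h

/-- If `x` belongs to some maximum-weight independent set of a finite matroid `M`
with nonnegative weights, then after deleting another element `i` (restricting to
the complement of `{i}`), `x` still belongs to some maximum-weight independent set. -/
theorem max_weight_deletion {E : Type*} (M : Matroid E) [M.Finite]
    (w : E → ℝ) (hw : ∀ e, 0 ≤ w e) (i x : E) (hix : i ≠ x)
    (hx : ∃ B : Set E, M.Indep B ∧ x ∈ B ∧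
      ∀ B' : Set E, M.Indep B' → ∑ᶠ e ∈ B', w e ≤ ∑ᶠ e ∈ B, w e) :
    ∃ B : Set E, (M ↾ (M.E \ {i})).Indep B ∧ x ∈ B ∧
      ∀ B' : Set E, (M ↾ (M.E \ {i})).Indep B' → ∑ᶠ e ∈ B', w e ≤ ∑ᶠ e ∈ B, w e := by
  classical
  obtain ⟨B, hB, hxB, hBmax⟩ := hx
  have hEfin := M.ground_finite
  have hxE : x ∈ M.E := hB.subset_ground hxB
  have hxR : x ∈ M.E \ {i} := ⟨hxE, fun h => hix (by simpa using h.symm)⟩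
  by_contra hcon
  push_neg at hcon
  -- a finite family of independent sets; choose a max-weight one
  have hfam : {I : Set E | (M ↾ (M.E \ {i})).Indep I}.Finite :=
    hEfin.finite_subsets.subset
      (fun I hI => ((Matroid.restrict_indep_iff.mp hI).1).subset_ground)
  obtain ⟨C, hCmem, hCmax'⟩ := Set.Finite.exists_maximalFor
    (fun S => ∑ᶠ e ∈ S, w e) _ hfam ⟨∅, (M ↾ (M.E \ {i})).empty_indep⟩
  have hCmax : ∀ D, (M ↾ (M.E \ {i})).Indep D →
      ∑ᶠ e ∈ D, w e ≤ ∑ᶠ e ∈ C, w e := by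
    intro D hD
    by_contra hlt
    push_neg at hlt
    exact hlt.not_ge (hCmax' hD hlt.le)
  have hlt : ∀ D, (M ↾ (M.E \ {i})).Indep D → x ∈ D →
      ∑ᶠ e ∈ D, w e < ∑ᶠ e ∈ C, w e := by
    intro D hD hxD
    obtain ⟨B', hB', h'⟩ := hcon D hD hxD
    exact h'.trans_le (hCmax B' hB')
  obtain ⟨hCindep, hCR⟩ := Matroid.restrict_indep_iff.mp hCmem
  have hCfin : C.Finite := hEfin.subset hCindep.subset_ground
  have hxC : x ∉ C := fun h => lt_irrefl _ (hlt C hCmem h)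
  have hxcl : x ∈ M.closure C := by
    by_contra hcl
    have hins : M.Indep (insert x C) :=
      (hCindep.notMem_closure_iff_of_notMem hxC hxE).mp hcl
    have hins' : (M ↾ (M.E \ {i})).Indep (insert x C) :=
      Matroid.restrict_indep_iff.mpr ⟨hins, insert_subset hxR hCR⟩
    have h := hlt _ hins' (mem_insert _ _)
    rw [finsum_mem_insert w hxC hCfin] at h
    linarith [hw x]
  set A := {y ∈ C | w x < w y} with hA
  have hAC : A ⊆ C := sep_subset _ _
  by_cases hxA : x ∈ M.closure A
  · -- contradiction with maximality of B in M
    have hBx : M.Indep (B \ {x}) := hB.subset diff_subset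
    have hXsub : (B \ {x}) ∪ A ⊆ M.E :=
      union_subset (diff_subset.trans hB.subset_ground)
        (hAC.trans hCindep.subset_ground)
    obtain ⟨J, hJ, hBJ⟩ := hBx.subset_isBasis_of_subset subset_union_left hXsub
    have hxJ : x ∈ M.closure J := by
      rw [hJ.closure_eq_closure]
      exact M.closure_subset_closure subset_union_right hxA
    have hne : ¬(J ⊆ B \ {x}) := by
      intro hsub
      have hJeq : J = B \ {x} := hsub.antisymm hBJ
      rw [hJeq] at hxJ
      exact hB.notMem_closure_sdiff_of_mem hxB hxJ
    obtain ⟨e, heJ, heB⟩ := not_subset.mp hne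
    have heA : e ∈ A := (hJ.subset heJ).resolve_left heB
    have hwe : w x < w e := heA.2
    have hD : M.Indep (insert e (B \ {x})) :=
      hJ.indep.subset (insert_subset heJ hBJ)
    have hBfin : B.Finite := hEfin.subset hB.subset_ground
    have hex : e ∉ B := by
      intro h
      exact heB ⟨h, fun hx' => lt_irrefl _ (by
        rw [mem_singleton_iff] at hx'; rw [hx'] at hwe; exact hwe)⟩
    have h := hBmax _ hD
    rw [finsum_mem_insert w (fun h' => hex h'.1) (hBfin.diff (t := {x}))] at h
    have hBsplit : ∑ᶠ e ∈ B, w e = w x + ∑ᶠ e ∈ B \ {x}, w e :=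
      finsum_split w hxB hBfin
    rw [hBsplit] at h
    linarith
  · -- exchange within `insert x C`
    have hAindep : M.Indep A := hCindep.subset hAC
    have hxA' : x ∉ A := fun h => hxC (hAC h)
    have hiA : M.Indep (insert x A) :=
      (hAindep.notMem_closure_iff_of_notMem hxA' hxE).mp hxA
    obtain ⟨J, hJ, hAJ⟩ := hiA.subset_isBasis_of_subset (insert_subset_insert hAC)
      (insert_subset hxE hCindep.subset_ground)
    have hCbasis : M.IsBasis C (insert x C) :=
      hCindep.insert_isBasis_iff_mem_closure.mpr hxcl
    have hcard : J.encard = C.encard := hJ.encard_eq_encard hCbasis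
    have hxJ : x ∈ J := hAJ (mem_insert _ _)
    have hJx : J \ {x} ⊆ C := by
      intro y hy
      rcases hJ.subset hy.1 with h | h
      · exact absurd h hy.2
      · exact h
    have hJfin : J.Finite := hEfin.subset hJ.indep.subset_ground
    have h1 : (C \ (J \ {x})).encard + (J \ {x}).encard = C.encard :=
      Set.encard_diff_add_encard_of_subset hJx
    have h2 : (J \ {x}).encard + 1 = J.encard :=
      Set.encard_diff_singleton_add_one hxJ
    have h3 : (C \ (J \ {x})).encard = 1 := by
      have hfin : (J \ {x}).encard ≠ ⊤ := (hJfin.diff (t := {x})).encard_lt_top.ne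
      have : (C \ (J \ {x})).encard + (J \ {x}).encard
          = 1 + (J \ {x}).encard := by
        rw [h1, ← hcard, ← h2, add_comm]
      exact WithTop.add_right_cancel hfin this
    obtain ⟨y, hy⟩ := Set.encard_eq_one.mp h3
    have hyC' : y ∈ C \ (J \ {x}) := hy ▸ mem_singleton y
    have hyC : y ∈ C := hyC'.1
    have hyJ : y ∉ J \ {x} := hyC'.2
    have hyA : y ∉ A := by
      intro h
      have hyx : y ≠ x := fun h' => hxC (h' ▸ hyC)
      exact hyJ ⟨hAJ (mem_insert_of_mem _ h), hyx⟩
    have hwy : w y ≤ w x := by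
      by_contra h
      push_neg at h
      exact hyA ⟨hyC, h⟩
    have hJeq : J = insert x (C \ {y}) := by
      have hJxeq : J \ {x} = C \ {y} := by
        ext z
        constructor
        · rintro hz
          refine ⟨hJx hz, fun hzy => ?_⟩
          rw [mem_singleton_iff] at hzy
          exact hyJ (hzy ▸ hz)
        · rintro ⟨hzC, hzy⟩
          by_contra hz
          by_cases hzx : z = x
          · exact hxC (hzx ▸ hzC)
          · have : z ∈ C \ (J \ {x}) := ⟨hzC, hz⟩
            rw [hy, mem_singleton_iff] at this
            exact hzy (by rw [this]; rfl)
      rw [← hJxeq, Set.insert_diff_singleton, insert_eq_of_mem hxJ]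
    have hJ' : (M ↾ (M.E \ {i})).Indep J := by
      refine Matroid.restrict_indep_iff.mpr ⟨hJ.indep, ?_⟩
      refine (hJ.subset).trans (insert_subset hxR hCR)
    have h := hlt J hJ' hxJ
    have hJsum : ∑ᶠ e ∈ J, w e = w x + ∑ᶠ e ∈ C \ {y}, w e := by
      rw [hJeq, finsum_mem_insert w (fun h' => hxC h'.1) (hCfin.diff (t := {y}))]
    have hCsum : ∑ᶠ e ∈ C, w e = w y + ∑ᶠ e ∈ C \ {y}, w e :=
      finsum_split w hyC hCfin
    rw [hJsum, hCsum] at h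
    linarith
end

section
/- Let γ > 0 and 0 ≤ α < γ/(1+γ). Suppose nonnegative reals V (survivors' true value), W^sv (sum of survivors' survival weights), P (bump payments' base, sum of bumped bids), and the constraint that total utility is nonnegative: V − (1−α)·W^sv + α·P ≥ 0, together with the chain bound γ·P ≤ W^sv and the approximation bound V + W^sv ≥ OPT/(1+γ). Then V ≥ ((1 − α − α/γ)/((2 − α − α/γ)·(1+γ)))·OPT. -/
theorem efficiency_core (γ α V Wsv P OPT : ℝ) (hγ : 0 < γ)
    (hα0 : 0 ≤ α) (hα1 : α < γ / (1 + γ))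
    (hV : 0 ≤ V) (hW : 0 ≤ Wsv) (hP : 0 ≤ P) (hOPT : 0 ≤ OPT)
    (hutil : V - (1 - α) * Wsv + α * P ≥ 0)
    (hchain : γ * P ≤ Wsv)
    (happrox : V + Wsv ≥ OPT / (1 + γ)) :
    V ≥ ((1 - α - α / γ) / ((2 - α - α / γ) * (1 + γ))) * OPT := by
  have h1γ : (0:ℝ) < 1 + γ := by linarith
  have haγ : α * (1 + γ) < γ := by rwa [lt_div_iff₀ h1γ] at hα1
  set a := α / γ with ha
  have haa : a * γ = α := div_mul_cancel₀ α (ne_of_gt hγ)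
  have hc : 0 < 1 - α - a := by nlinarith
  -- V ≥ (1-α-a) * Wsv
  have hkey : (1 - α - a) * Wsv ≤ V := by
    have h2 : α * P ≤ a * Wsv := by nlinarith
    nlinarith
  have happ : OPT / (1 + γ) ≤ V + Wsv := happrox
  have happ' : OPT ≤ (V + Wsv) * (1 + γ) := by
    rwa [div_le_iff₀ h1γ] at happ
  rw [ge_iff_le, div_mul_eq_mul_div, div_le_iff₀ (by nlinarith)]
  nlinarith [mul_nonneg (le_of_lt hc) hW]
end

section
/- In a bipartite graph where left vertices are bidders and right vertices are items, suppose B is a set of bidders that can be matched (saturated) into items, V is a perfect matching set of bidders (a matched set saturating all items), B ∪ {i} cannot be matched for some bidder i ∈ V \ B, and weights satisfy w(b) ≥ w(i) for all b ∈ B. Then there exists a bidder b ∈ B with b ∉ V \ {i} such that (V \ {i}) ∪ {b} can be matched, and hence w((V \ {i}) ∪ {b}) ≥ w(V). -/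
/-- A set of bidders `S` can be matched: there is an assignment of distinct items,
each from the corresponding bidder's choice set. -/
def CanMatch {Bd It : Type*} (N : Bd → Set It) (S : Set Bd) : Prop :=
  ∃ f : Bd → It, Set.InjOn f S ∧ ∀ b ∈ S, f b ∈ N b

/-- A set of bidders `S` forms a perfect matching: it can be matched so that
every item is used. -/
def IsPerfectMatching {Bd It : Type*} (N : Bd → Set It) (S : Set Bd) : Prop :=
  ∃ f : Bd → It, Set.InjOn f S ∧ (∀ b ∈ S, f b ∈ N b) ∧ ∀ i : It, ∃ b ∈ S, f b = i

theorem exchange_step {Bd It : Type*} [Fintype Bd] [Fintype It]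
    (N : Bd → Set It) (w : Bd → ℝ) (B V : Set Bd) (i : Bd)
    (hB : CanMatch N B) (hV : IsPerfectMatching N V)
    (hdep : ¬ CanMatch N (B ∪ {i})) (hiV : i ∈ V) (hiB : i ∉ B)
    (hwt : ∀ b ∈ B, w i ≤ w b) :
    ∃ b ∈ B, b ∉ V \ {i} ∧ CanMatch N ((V \ {i}) ∪ {b}) ∧
      ∑ᶠ x ∈ (V \ {i}) ∪ {b}, w x ≥ ∑ᶠ x ∈ V, w x := by
  classical
  obtain ⟨f, hfInj, hfN⟩ := hB
  obtain ⟨g, hgInj, hgN, hgSurj⟩ := hV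
  choose σ hσV hσg using hgSurj
  have hσ_of : ∀ v ∈ V, σ (g v) = v := fun v hv => hgInj (hσV (g v)) hv (hσg (g v))
  set φ : Bd → Bd := fun x => σ (f x) with hφ
  set step : Bd → Bd → Prop := fun x y => x ∈ B ∧ φ x = y with hstep
  set R : Set Bd := {b | Relation.TransGen step b i} with hR
  have hcases : ∀ {a : Bd}, Relation.TransGen step a i →
      step a i ∨ ∃ c, step a c ∧ Relation.TransGen step c i := by
    intro a h
    rcases (Relation.TransGen.head'_iff.mp h) with ⟨c, hac, hci⟩
    rcases Relation.ReflTransGen.cases_head hci with rfl | ⟨d, hcd, hdi⟩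
    · exact Or.inl hac
    · exact Or.inr ⟨c, hac, Relation.TransGen.head' hcd hdi⟩
  have hRB : ∀ b ∈ R, b ∈ B := by
    intro b hb
    rcases hcases hb with h | ⟨c, h, _⟩ <;> exact h.1
  have hclose : ∀ x ∈ B, (φ x ∈ R ∨ φ x = i) → x ∈ R := by
    intro x hx h
    rcases h with h | h
    · exact Relation.TransGen.head ⟨hx, rfl⟩ h
    · exact Relation.TransGen.single ⟨hx, h⟩
  have hdet : ∀ x ∈ R, φ x ∈ R ∨ φ x = i := by
    intro x hx
    rcases hcases hx with h | ⟨c, h, hc⟩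
    · exact Or.inr h.2
    · exact Or.inl (h.2 ▸ hc)
  -- key step relation from equal matched items
  have hkey : ∀ x, x ∈ B → ∀ y ∈ V, f x = g y → φ x = y := by
    intro x hx y hy hxy
    have : σ (f x) = σ (g y) := by rw [hxy]
    rw [hσ_of y hy] at this
    exact this
  have hmain : ∃ b ∈ R, b ∉ V \ {i} := by
    by_contra hcon
    push_neg at hcon
    apply hdep
    refine ⟨fun x => if x ∈ R ∨ x = i then g x else f x, ?_, ?_⟩
    · intro x hx y hy hxy
      simp only at hxy
      have hVmem : ∀ z, (z ∈ R ∨ z = i) → z ∈ V := by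
        rintro z (hz | rfl)
        · exact (hcon z hz).1
        · exact hiV
      by_cases hxR : x ∈ R ∨ x = i <;> by_cases hyR : y ∈ R ∨ y = i
      · rw [if_pos hxR, if_pos hyR] at hxy
        exact hgInj (hVmem x hxR) (hVmem y hyR) hxy
      · -- x in R∪{i}, y not : y ∈ B
        rw [if_pos hxR, if_neg hyR] at hxy
        have hyB : y ∈ B := by
          rcases hy with hy | hy
          · exact hy
          · exact absurd (Or.inr hy) hyR
        have := hkey y hyB x (hVmem x hxR) hxy.symm
        exact absurd (Or.inl (hclose y hyB (this ▸ hxR))) hyR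
      · rw [if_neg hxR, if_pos hyR] at hxy
        have hxB : x ∈ B := by
          rcases hx with hx | hx
          · exact hx
          · exact absurd (Or.inr hx) hxR
        have := hkey x hxB y (hVmem y hyR) hxy
        exact absurd (Or.inl (hclose x hxB (this ▸ hyR))) hxR
      · rw [if_neg hxR, if_neg hyR] at hxy
        have hxB : x ∈ B := by
          rcases hx with hx | hx
          · exact hx
          · exact absurd (Or.inr hx) hxR
        have hyB : y ∈ B := by
          rcases hy with hy | hy
          · exact hy
          · exact absurd (Or.inr hy) hyR
        exact hfInj hxB hyB hxy
    · intro x hx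
      simp only
      by_cases hxR : x ∈ R ∨ x = i
      · rw [if_pos hxR]
        rcases hxR with hxR | rfl
        · exact hgN x (hcon x hxR).1
        · exact hgN x hiV
      · rw [if_neg hxR]
        rcases hx with hx | hx
        · exact hfN x hx
        · exact absurd (Or.inr hx) hxR
  obtain ⟨b, hbR, hbV⟩ := hmain
  have hbB : b ∈ B := hRB b hbR
  refine ⟨b, hbB, hbV, ?_, ?_⟩
  · -- matching on (V \ {i}) ∪ {b}
    refine ⟨fun x => if x ∈ R then f x else g x, ?_, ?_⟩
    · intro x hx y hy hxy
      simp only at hxy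
      have hmemV : ∀ z, z ∈ (V \ {i}) ∪ {b} → z ∉ R → z ∈ V \ {i} := by
        rintro z (hz | rfl) hzR
        · exact hz
        · exact absurd hbR hzR
      have hcross : ∀ x', x' ∈ R → ∀ y', y' ∈ V \ {i} → y' ∉ R → f x' ≠ g y' := by
        intro x' hx' y' hy' hy'R hxy'
        have hstep' := hkey x' (hRB x' hx') y' hy'.1 hxy'
        rcases hdet x' hx' with h | h
        · exact hy'R (hstep' ▸ h)
        · exact hy'.2 (hstep' ▸ h)
      by_cases hxR : x ∈ R <;> by_cases hyR : y ∈ R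
      · rw [if_pos hxR, if_pos hyR] at hxy
        exact hfInj (hRB x hxR) (hRB y hyR) hxy
      · rw [if_pos hxR, if_neg hyR] at hxy
        exact absurd hxy (hcross x hxR y (hmemV y hy hyR) hyR)
      · rw [if_neg hxR, if_pos hyR] at hxy
        exact absurd hxy.symm (hcross y hyR x (hmemV x hx hxR) hxR)
      · rw [if_neg hxR, if_neg hyR] at hxy
        exact hgInj (hmemV x hx hxR).1 (hmemV y hy hyR).1 hxy
    · intro x hx
      simp only
      by_cases hxR : x ∈ R
      · rw [if_pos hxR]; exact hfN x (hRB x hxR)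
      · rw [if_neg hxR]
        rcases hx with hx | rfl
        · exact hgN x hx.1
        · exact absurd hbR hxR
  · -- weights
    have h1 : (V \ {i}) ∪ {b} = insert b (V \ {i}) := by
      rw [Set.union_singleton]
    have h2 : V = insert i (V \ {i}) := by
      rw [Set.insert_diff_singleton, Set.insert_eq_of_mem hiV]
    have hfin : (V \ {i} : Set Bd).Finite := Set.toFinite _
    rw [h1, finsum_mem_insert w hbV hfin]
    conv_rhs => rw [h2, finsum_mem_insert w (fun h => h.2 rfl) hfin]
    have := hwt b hbB
    linarith
end
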